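/- Let M be the additive submonoid of ℚ≥0 generated by {1/p : p prime}. Then M is atomic with atoms {1/p : p prime}, and 1 is the unique Betti element of M. In particular, M has finitely many Betti elements but is not finitely generated. -/

import Mathlib

/-- `a` is an (additive) atom of the submonoid `S`. -/
def IsAddAtomIn {R : Type*} [AddCommMonoid R] (S : AddSubmonoid R) (a : R) : Prop :=
  a ∈ S ∧ a ≠ 0 ∧ ∀ u v, u ∈ S → v ∈ S → u ≠ 0 → v ≠ 0 → a ≠ u + v

/-- Factorizations of `x` into atoms of `S`: multisets of atoms summing to `x`. -/
def Factorizations {R : Type*} [AddCommMonoid R] (S : AddSubmonoid R) (x : R) : Type _ :=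
  {l : Multiset R // (∀ a ∈ l, IsAddAtomIn S a) ∧ l.sum = x}

/-- The Betti graph of `x`: vertices are the factorizations of `x`, with an edge between
two distinct factorizations precisely when they share a common atom. -/
def bettiGraph {R : Type*} [AddCommMonoid R] (S : AddSubmonoid R) (x : R) :
    SimpleGraph (Factorizations S x) where
  Adj z z' := z ≠ z' ∧ ∃ a, a ∈ z.1 ∧ a ∈ z'.1
  symm := ⟨fun z z' h => ⟨h.1.symm, h.2.imp fun a ha => ⟨ha.2, ha.1⟩⟩⟩
  loopless := ⟨fun z h => h.1 rfl⟩

/-- `x` is a Betti element of `S`: `x ∈ S` and its Betti graph is disconnected. -/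
def IsBetti {R : Type*} [AddCommMonoid R] (S : AddSubmonoid R) (x : R) : Prop :=
  x ∈ S ∧ ¬ (bettiGraph S x).Connected

/-!
Write an element of `M` as `∑ c_p / p`. Clearing denominators in two such expressions of the same
element shows `c_p ≡ c'_p (mod p)` for every prime `p`. As a prime `q` with `q ∣ c_q ≠ 0`
contributes at least `1` to the sum, `1 / p` has no nontrivial factorization, and a factorization
of `1` containing `1 / p` must be `p • (1 / p)`, so `2 • (1 / 2)` is an isolated vertex of the
Betti graph of `1`. For any other `x ∈ M`: if some `c_p` is not divisible by `p`, then `1 / p`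
occurs in every factorization of `x`; otherwise `x` is an integer `n ≥ 2` (or `0`), and
factorizations containing `1 / p` and `1 / p'` are linked through
`p • (1 / p) + (n - 1) p' • (1 / p')`.
-/

open Multiset

theorem Multiset.exists_map_eq_of_forall_mem_range {α β : Type*} {f : α → β} {l : Multiset β}
    (h : ∀ b ∈ l, b ∈ Set.range f) : ∃ s : Multiset α, s.map f = l := by
  have : CanLift β α f (· ∈ Set.range f) := ⟨fun _ hb => hb⟩
  lift l to Multiset α using h
  exact ⟨l, rfl⟩

theorem AddSubmonoid.mem_closure_range_iff_exists_multiset {ι R : Type*} [AddCommMonoid R]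
    {f : ι → R} {x : R} :
    x ∈ AddSubmonoid.closure (Set.range f) ↔ ∃ s : Multiset ι, (s.map f).sum = x := by
  constructor
  · intro hx
    obtain ⟨l, hl, rfl⟩ := AddSubmonoid.exists_multiset_of_mem_closure hx
    obtain ⟨s, rfl⟩ := Multiset.exists_map_eq_of_forall_mem_range hl
    exact ⟨s, rfl⟩
  · rintro ⟨s, rfl⟩
    exact AddSubmonoid.multiset_sum_mem _ _ fun a ha => by
      obtain ⟨i, -, rfl⟩ := Multiset.mem_map.1 ha
      exact AddSubmonoid.subset_closure ⟨i, rfl⟩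

theorem mem_of_isAddAtomIn_closure {R : Type*} [AddCommMonoid R] {F : Set R} {a : R}
    (ha : IsAddAtomIn (AddSubmonoid.closure F) a) : a ∈ F := by
  obtain ⟨haS, ha0, hsplit⟩ := ha
  obtain ⟨l, hl, hsum⟩ := AddSubmonoid.exists_multiset_of_mem_closure haS
  induction l using Multiset.induction_on with
  | empty => exact absurd hsum.symm (by simpa using ha0)
  | cons b t ih =>
    rw [Multiset.sum_cons] at hsum
    have hb : b ∈ F := hl b (mem_cons_self b t)
    by_cases hb0 : b = 0
    · exact ih (fun c hc => hl c (mem_cons_of_mem hc)) (by rwa [hb0, zero_add] at hsum)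
    by_cases ht0 : t.sum = 0
    · rwa [← hsum, ht0, add_zero]
    refine absurd hsum.symm (hsplit b t.sum (AddSubmonoid.subset_closure hb) ?_ hb0 ht0)
    exact AddSubmonoid.multiset_sum_mem _ _ fun c hc =>
      AddSubmonoid.subset_closure (hl c (mem_cons_of_mem hc))

theorem SimpleGraph.not_reachable_of_forall_not_adj {V : Type*} {G : SimpleGraph V} {u v : V}
    (hu : ∀ w, ¬ G.Adj u w) (huv : u ≠ v) : ¬ G.Reachable u v := by
  rw [SimpleGraph.reachable_eq_reflTransGen]
  intro h
  rcases h.cases_head with h | ⟨w, hw, -⟩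
  exacts [huv h, hu w hw]

theorem bettiGraph_reachable_of_mem {R : Type*} [AddCommMonoid R] {S : AddSubmonoid R} {x a : R}
    {z z' : Factorizations S x} (ha : a ∈ z.1) (ha' : a ∈ z'.1) :
    (bettiGraph S x).Reachable z z' := by
  by_cases h : z = z'
  · exact h ▸ SimpleGraph.Reachable.refl z
  · exact SimpleGraph.Adj.reachable (G := bettiGraph S x) ⟨h, a, ha, ha'⟩

def primeRecip (p : Nat.Primes) : ℚ := 1 / (p : ℕ)

def recipSum (P : Multiset Nat.Primes) : ℚ := (P.map primeRecip).sum

def primeRecipMonoid : AddSubmonoid ℚ := AddSubmonoid.closure (Set.range primeRecip)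

theorem primeRecip_pos (p : Nat.Primes) : 0 < primeRecip p := by
  simpa [primeRecip] using p.2.pos

theorem primeRecip_injective : Function.Injective primeRecip := fun p q h =>
  Subtype.ext (by simpa [primeRecip] using h)

@[simp]
theorem recipSum_zero : recipSum 0 = 0 := rfl

@[simp]
theorem recipSum_add (P Q : Multiset Nat.Primes) : recipSum (P + Q) = recipSum P + recipSum Q := by
  simp [recipSum]

@[simp]
theorem recipSum_replicate (k : ℕ) (p : Nat.Primes) : recipSum (replicate k p) = k / (p : ℕ) := by
  simp [recipSum, primeRecip, div_eq_mul_inv]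

theorem recipSum_replicate_self (p : Nat.Primes) : recipSum (replicate p p) = 1 := by
  rw [recipSum_replicate, div_self (by exact_mod_cast p.2.ne_zero)]

theorem recipSum_pos {P : Multiset Nat.Primes} (hP : P ≠ 0) : 0 < recipSum P := by
  obtain ⟨p, hp⟩ := exists_mem_of_ne_zero hP
  obtain ⟨t, rfl⟩ := exists_cons_of_mem hp
  have ht : 0 ≤ recipSum t :=
    sum_nonneg fun a ha => by
      obtain ⟨q, -, rfl⟩ := mem_map.1 ha
      exact (primeRecip_pos q).le
  simpa [recipSum] using add_pos_of_pos_of_nonneg (primeRecip_pos p) ht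

theorem recipSum_eq_sum_count_of_subset [DecidableEq Nat.Primes] {P : Multiset Nat.Primes}
    {S : Finset Nat.Primes} (hS : P.toFinset ⊆ S) :
    recipSum P = ∑ p ∈ S, (count p P : ℚ) / (p : ℕ) := by
  rw [recipSum, Finset.sum_multiset_map_count, Finset.sum_subset hS fun p _ hp => by
    simp [count_eq_zero_of_notMem (mt mem_toFinset.2 hp)]]
  simp [primeRecip, div_eq_mul_inv]

theorem mem_primeRecipMonoid_iff {x : ℚ} : x ∈ primeRecipMonoid ↔ ∃ P, recipSum P = x :=
  AddSubmonoid.mem_closure_range_iff_exists_multiset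

theorem dvd_of_sum_div_eq_zero {S : Finset Nat.Primes} {d : Nat.Primes → ℤ}
    (h : ∑ p ∈ S, (d p : ℚ) / (p : ℕ) = 0) {q : Nat.Primes} (hq : q ∈ S) :
    ((q : ℕ) : ℤ) ∣ d q := by
  classical
  let m : Nat.Primes → ℤ := fun p => ∏ r ∈ S.erase p, ((r : ℕ) : ℤ)
  have hm : ∀ p ∈ S, (d p : ℚ) / (p : ℕ) * ∏ r ∈ S, ((r : ℕ) : ℚ) = ((d p * m p : ℤ) : ℚ) := by
    intro p hp
    rw [← Finset.mul_prod_erase S _ hp]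
    have : ((p : ℕ) : ℚ) ≠ 0 := by exact_mod_cast p.2.ne_zero
    push_cast [m]
    field_simp
  have hsum : ∑ p ∈ S, d p * m p = 0 := by
    have := congrArg (· * ∏ r ∈ S, ((r : ℕ) : ℚ)) h
    simp only [Finset.sum_mul, zero_mul] at this
    rw [Finset.sum_congr rfl hm] at this
    exact_mod_cast this
  have hrest : ((q : ℕ) : ℤ) ∣ ∑ p ∈ S.erase q, d p * m p :=
    Finset.dvd_sum fun p hp => Dvd.dvd.mul_left (Finset.dvd_prod_of_mem _
      (Finset.mem_erase.2 ⟨(Finset.ne_of_mem_erase hp).symm, hq⟩)) _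
  rw [← Finset.add_sum_erase S _ hq, add_eq_zero_iff_eq_neg] at hsum
  have hqprime : Prime ((q : ℕ) : ℤ) := Nat.prime_iff_prime_int.1 q.2
  -- `m q` is a product of primes different from `q`
  refine (hqprime.dvd_or_dvd (hsum ▸ hrest.neg_right)).resolve_right fun hdvd => ?_
  obtain ⟨r, hr, hqr⟩ := (hqprime.dvd_finsetProd_iff _).1 hdvd
  have : (q : ℕ) = r := (Nat.prime_dvd_prime_iff_eq q.2 r.2).1 (Int.natCast_dvd_natCast.1 hqr)
  exact Finset.ne_of_mem_erase hr (Subtype.ext this).symm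

theorem dvd_count_sub_count_of_recipSum_eq {P P' : Multiset Nat.Primes}
    (h : recipSum P = recipSum P') (q : Nat.Primes) :
    ((q : ℕ) : ℤ) ∣ count q P - count q P' := by
  classical
  by_cases hq : q ∈ (P + P').toFinset
  · refine dvd_of_sum_div_eq_zero (d := fun p => count p P - count p P') ?_ hq
    have hsub : ∀ Q ≤ P + P', Q.toFinset ⊆ (P + P').toFinset := fun Q hQ =>
      toFinset_subset.2 (subset_of_le hQ)
    rw [recipSum_eq_sum_count_of_subset (hsub P (le_add_right _ _)),
      recipSum_eq_sum_count_of_subset (hsub P' (le_add_left _ _))] at h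
    push_cast
    simp only [sub_div, Finset.sum_sub_distrib, h, sub_self]
  · rw [mem_toFinset, mem_add, not_or] at hq
    simp [count_eq_zero_of_notMem hq.1, count_eq_zero_of_notMem hq.2]

theorem one_lt_recipSum {P : Multiset Nat.Primes} {p q : Nat.Primes} (hp : p ∈ P) (hq : q ∈ P)
    (hpq : p ≠ q) (hdvd : (q : ℕ) ∣ count q P) : 1 < recipSum P := by
  classical
  have hq_le : 1 ≤ (count q P : ℚ) / (q : ℕ) := by
    rw [one_le_div (by exact_mod_cast q.2.pos)]
    exact_mod_cast Nat.le_of_dvd (count_pos.2 hq) hdvd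
  have hp_pos : 0 < (count p P : ℚ) / (p : ℕ) :=
    div_pos (by exact_mod_cast count_pos.2 hp) (by exact_mod_cast p.2.pos)
  calc 1 < (count q P : ℚ) / (q : ℕ) + (count p P : ℚ) / (p : ℕ) := by linarith
    _ ≤ recipSum P := by
      rw [recipSum_eq_sum_count_of_subset subset_rfl]
      exact Finset.add_le_sum (f := fun r => (count r P : ℚ) / (r : ℕ)) (fun r _ => by positivity)
        (mem_toFinset.2 hq) (mem_toFinset.2 hp) hpq.symm

theorem eq_replicate_of_recipSum_eq {P : Multiset Nat.Primes} {p : Nat.Primes} {k : ℕ}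
    (hp : p ∈ P) (hk : k ≤ p) (h : recipSum P = recipSum (replicate k p)) :
    P = replicate k p := by
  have hp0 : ((p : ℕ) : ℚ) ≠ 0 := by exact_mod_cast p.2.ne_zero
  have hall : ∀ q ∈ P, q = p := by
    intro q hq
    by_contra hqp
    have hdvd := dvd_count_sub_count_of_recipSum_eq h q
    rw [count_replicate, if_neg (Ne.symm hqp), Nat.cast_zero, sub_zero,
      Int.natCast_dvd_natCast] at hdvd
    have hle : recipSum (replicate k p) ≤ 1 := by
      rw [recipSum_replicate, div_le_one (by exact_mod_cast p.2.pos)]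
      exact_mod_cast hk
    linarith [one_lt_recipSum hp hq (Ne.symm hqp) hdvd]
  rw [eq_replicate_card.2 hall, recipSum_replicate, recipSum_replicate,
    div_left_inj' hp0, Nat.cast_inj] at h
  rw [eq_replicate_card.2 hall, h]

theorem exists_recipSum_eq_natCast {P : Multiset Nat.Primes}
    (h : ∀ q : Nat.Primes, (q : ℕ) ∣ count q P) : ∃ n : ℕ, recipSum P = n := by
  classical
  refine ⟨∑ q ∈ P.toFinset, count q P / q, ?_⟩
  rw [recipSum_eq_sum_count_of_subset subset_rfl, Nat.cast_sum]
  exact Finset.sum_congr rfl fun q _ =>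
    (Nat.cast_div (h q) (by exact_mod_cast q.2.ne_zero)).symm

theorem isAddAtomIn_primeRecipMonoid_iff {a : ℚ} :
    IsAddAtomIn primeRecipMonoid a ↔ a ∈ Set.range primeRecip := by
  refine ⟨mem_of_isAddAtomIn_closure, ?_⟩
  rintro ⟨p, rfl⟩
  refine ⟨AddSubmonoid.subset_closure ⟨p, rfl⟩, (primeRecip_pos p).ne', ?_⟩
  intro u v hu hv hu0 hv0 huv
  obtain ⟨U, rfl⟩ := mem_primeRecipMonoid_iff.1 hu
  obtain ⟨V, rfl⟩ := mem_primeRecipMonoid_iff.1 hv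
  have hsum : recipSum (U + V) = recipSum (replicate 1 p) := by
    rw [recipSum_add, ← huv, recipSum_replicate]
    simp [primeRecip]
  have hp : p ∈ U + V := by
    by_contra hp
    have := dvd_count_sub_count_of_recipSum_eq hsum p
    rw [count_eq_zero_of_notMem hp, count_replicate_self, Nat.cast_zero, Nat.cast_one, zero_sub,
      dvd_neg] at this
    exact p.2.ne_one (by exact_mod_cast Int.eq_one_of_dvd_one (Int.natCast_nonneg _) this)
  have hcard := congrArg card (eq_replicate_of_recipSum_eq hp p.2.one_lt.le hsum)
  have hU : U ≠ 0 := by rintro rfl; exact hu0 rfl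
  have hV : V ≠ 0 := by rintro rfl; exact hv0 rfl
  rw [card_add, card_replicate] at hcard
  have := card_pos.2 hU
  have := card_pos.2 hV
  omega

theorem Factorizations.exists_map_eq {x : ℚ} (z : Factorizations primeRecipMonoid x) :
    ∃ P, P.map primeRecip = z.1 ∧ recipSum P = x := by
  obtain ⟨P, hP⟩ := Multiset.exists_map_eq_of_forall_mem_range fun a ha =>
    isAddAtomIn_primeRecipMonoid_iff.1 (z.2.1 a ha)
  exact ⟨P, hP, by rw [recipSum, hP, z.2.2]⟩

def toFactorization (P : Multiset Nat.Primes) {x : ℚ} (h : recipSum P = x) :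
    Factorizations primeRecipMonoid x :=
  ⟨P.map primeRecip, fun a ha => by
    obtain ⟨p, -, rfl⟩ := mem_map.1 ha
    exact isAddAtomIn_primeRecipMonoid_iff.2 ⟨p, rfl⟩, h⟩

theorem bettiGraph_zero_connected : (bettiGraph primeRecipMonoid 0).Connected := by
  have hz : ∀ z : Factorizations primeRecipMonoid 0, z = toFactorization 0 rfl := by
    intro z
    obtain ⟨P, hPz, hP⟩ := z.exists_map_eq
    have : P = 0 := by
      by_contra hP0
      exact (recipSum_pos hP0).ne' hP
    exact Subtype.ext (by simp [← hPz, this, toFactorization])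
  have : Nonempty (Factorizations primeRecipMonoid 0) := ⟨toFactorization 0 rfl⟩
  exact ⟨fun z z' => hz z ▸ hz z' ▸ .refl _⟩

theorem bettiGraph_connected_of_not_dvd_count {P₀ : Multiset Nat.Primes} {q : Nat.Primes}
    (hq : ¬ (q : ℕ) ∣ count q P₀) : (bettiGraph primeRecipMonoid (recipSum P₀)).Connected := by
  have hmem : ∀ z : Factorizations primeRecipMonoid (recipSum P₀), primeRecip q ∈ z.1 := by
    intro z
    obtain ⟨P, hPz, hP⟩ := z.exists_map_eq
    rw [← hPz]
    refine mem_map_of_mem _ (count_ne_zero.1 fun h0 => hq ?_)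
    have := dvd_count_sub_count_of_recipSum_eq hP q
    rw [h0, Nat.cast_zero, zero_sub, dvd_neg] at this
    exact_mod_cast this
  have : Nonempty (Factorizations primeRecipMonoid (recipSum P₀)) := ⟨toFactorization P₀ rfl⟩
  exact ⟨fun z z' => bettiGraph_reachable_of_mem (hmem z) (hmem z')⟩

theorem bettiGraph_natCast_connected {n : ℕ} (hn : 2 ≤ n) :
    (bettiGraph primeRecipMonoid n).Connected := by
  have hatom : ∀ z : Factorizations primeRecipMonoid n, ∃ p, primeRecip p ∈ z.1 := by
    intro z
    obtain ⟨P, hPz, hP⟩ := z.exists_map_eq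
    have hP0 : P ≠ 0 := by
      rintro rfl
      rw [recipSum_zero] at hP
      exact (show n ≠ 0 by omega) (by exact_mod_cast hP.symm)
    obtain ⟨p, hp⟩ := exists_mem_of_ne_zero hP0
    exact ⟨p, hPz ▸ mem_map_of_mem _ hp⟩
  let link (p p' : Nat.Primes) : Factorizations primeRecipMonoid n :=
    toFactorization (replicate p p + replicate ((n - 1) * p') p') (by
      have : ((p : ℕ) : ℚ) ≠ 0 := by exact_mod_cast p.2.ne_zero
      have : ((p' : ℕ) : ℚ) ≠ 0 := by exact_mod_cast p'.2.ne_zero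
      simp only [recipSum_add, recipSum_replicate, Nat.cast_mul, Nat.cast_sub (by omega : 1 ≤ n)]
      field_simp
      ring)
  have hlink : ∀ p p', primeRecip p ∈ (link p p').1 ∧ primeRecip p' ∈ (link p p').1 := by
    intro p p'
    simp only [link, toFactorization]
    refine ⟨mem_map_of_mem _ (mem_add.2 (Or.inl (mem_replicate.2 ⟨p.2.ne_zero, rfl⟩))),
      mem_map_of_mem _ (mem_add.2 (Or.inr (mem_replicate.2 ⟨?_, rfl⟩)))⟩
    exact Nat.mul_ne_zero (by omega) p'.2.ne_zero
  have : Nonempty (Factorizations primeRecipMonoid n) := ⟨link default default⟩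
  refine ⟨fun z z' => ?_⟩
  obtain ⟨p, hp⟩ := hatom z
  obtain ⟨p', hp'⟩ := hatom z'
  exact (bettiGraph_reachable_of_mem hp (hlink p p').1).trans
    (bettiGraph_reachable_of_mem (hlink p p').2 hp')

theorem bettiGraph_connected_of_ne_one {x : ℚ} (hx : x ∈ primeRecipMonoid) (hx1 : x ≠ 1) :
    (bettiGraph primeRecipMonoid x).Connected := by
  obtain ⟨P, rfl⟩ := mem_primeRecipMonoid_iff.1 hx
  by_cases h : ∃ q : Nat.Primes, ¬ (q : ℕ) ∣ count q P
  · obtain ⟨q, hq⟩ := h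
    exact bettiGraph_connected_of_not_dvd_count hq
  push Not at h
  obtain ⟨n, hn⟩ := exists_recipSum_eq_natCast h
  rw [hn] at hx1 ⊢
  rcases n with _ | _ | n
  · rw [Nat.cast_zero]
    exact bettiGraph_zero_connected
  · exact absurd Nat.cast_one hx1
  · exact bettiGraph_natCast_connected (by omega)

theorem bettiGraph_one_not_connected : ¬ (bettiGraph primeRecipMonoid 1).Connected := by
  let two : Nat.Primes := ⟨2, Nat.prime_two⟩
  let three : Nat.Primes := ⟨3, Nat.prime_three⟩
  let z₂ := toFactorization (replicate two two) (recipSum_replicate_self two)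
  let z₃ := toFactorization (replicate three three) (recipSum_replicate_self three)
  have hisolated : ∀ w, ¬ (bettiGraph primeRecipMonoid 1).Adj z₂ w := by
    rintro w ⟨hne, a, ha₂, haw⟩
    obtain ⟨P, hPw, hP⟩ := w.exists_map_eq
    obtain rfl : a = primeRecip two :=
      eq_of_mem_replicate (by simpa [z₂, toFactorization] using ha₂)
    rw [← hPw, mem_map_of_injective primeRecip_injective] at haw
    have hP2 :=
      eq_replicate_of_recipSum_eq haw le_rfl (hP.trans (recipSum_replicate_self two).symm)
    exact hne (Subtype.ext (by simp [z₂, toFactorization, ← hPw, hP2]))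
  have hne : z₂ ≠ z₃ := fun h => by
    have := congrArg (fun z => card z.1) h
    simp only [z₂, z₃, toFactorization, card_map, card_replicate] at this
    exact absurd this (by decide)
  exact fun h => SimpleGraph.not_reachable_of_forall_not_adj hisolated hne (h.preconnected z₂ z₃)

theorem isBetti_primeRecipMonoid_iff {x : ℚ} : IsBetti primeRecipMonoid x ↔ x = 1 := by
  refine ⟨fun ⟨hx, hnc⟩ => by_contra fun hx1 => hnc (bettiGraph_connected_of_ne_one hx hx1), ?_⟩
  rintro rfl
  let two : Nat.Primes := ⟨2, Nat.prime_two⟩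
  exact ⟨mem_primeRecipMonoid_iff.2 ⟨_, recipSum_replicate_self two⟩, bettiGraph_one_not_connected⟩

theorem primeRecipMonoid_not_fg : ¬ primeRecipMonoid.FG := by
  rintro ⟨F, hF⟩
  have hsub : Set.range primeRecip ⊆ F := fun a ha =>
    mem_of_isAddAtomIn_closure (hF ▸ isAddAtomIn_primeRecipMonoid_iff.2 ha)
  exact (Set.infinite_range_of_injective primeRecip_injective).mono hsub F.finite_toSet

theorem setOf_eq_one_div_prime_eq_range :
    {x : ℚ | ∃ p : ℕ, p.Prime ∧ x = 1 / p} = Set.range primeRecip := by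
  ext x
  exact ⟨fun ⟨p, hp, hx⟩ => ⟨⟨p, hp⟩, hx.symm⟩, fun ⟨p, hx⟩ => ⟨p, p.2, hx.symm⟩⟩

/-- Let `M = ⟨1/p : p prime⟩ ⊆ ℚ≥0`. Then `M` is atomic with atoms `{1/p : p prime}`,
`1` is the unique Betti element of `M`; in particular `M` has finitely many Betti elements
but is not finitely generated. -/
theorem stmt_15 (M : AddSubmonoid ℚ)
    (hM : M = AddSubmonoid.closure {x : ℚ | ∃ p : ℕ, p.Prime ∧ x = 1 / p}) :
    (∀ x ∈ M, x ≠ 0 → ∃ l : Multiset ℚ, (∀ a ∈ l, IsAddAtomIn M a) ∧ l.sum = x) ∧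
    (∀ a, IsAddAtomIn M a ↔ ∃ p : ℕ, p.Prime ∧ a = 1 / p) ∧
    (∀ x, IsBetti M x ↔ x = 1) ∧
    {x | IsBetti M x}.Finite ∧
    ¬ ∃ F : Finset ℚ, M = AddSubmonoid.closure (F : Set ℚ) := by
  rw [setOf_eq_one_div_prime_eq_range] at hM
  subst hM
  refine ⟨fun x hx _ => ?_, fun a => isAddAtomIn_primeRecipMonoid_iff.trans ?_,
    fun _ => isBetti_primeRecipMonoid_iff, ?_, fun ⟨F, hF⟩ => primeRecipMonoid_not_fg ⟨F, hF.symm⟩⟩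
  · obtain ⟨P, hP⟩ := mem_primeRecipMonoid_iff.1 hx
    exact ⟨_, (toFactorization P hP).2⟩
  · rw [← setOf_eq_one_div_prime_eq_range]
    rfl
  · exact (Set.finite_singleton 1).subset fun x hx => isBetti_primeRecipMonoid_iff.1 hx
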